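/- arXiv:2210.03262 — 11 statements merged into one kernel-verified Lean document; each statement's English description precedes it below -/
import Mathlib

section
/- Let a, b ≥ 1 be integers with gcd(a,b) = 1, and let k ≥ 1. Then there exists a k-coloring of the interval [1, a^k − 1] with no monochromatic positive-integer solution (x,y,z) to the equation a(x − y) = bz. Consequently, the k-color Rado number R_k(a(x−y)=bz) is at least a^k. -/
/-!
Colour `n` by `v_a(n) mod k`. Below `a ^ k` every valuation is less than `k`, so equal colours
mean equal valuations. If `a ^ d` divides `x` and `y`, then `a ^ (d + 1)` divides
`a * x - a * y = b * z`, hence divides `z` since `a` is coprime to `b`; so `z` cannot have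
valuation `d` as well.
-/

lemma padicValNat_lt_of_lt_pow {a n k : ℕ} (hn : 0 < n) (hlt : n < a ^ k) :
    padicValNat a n < k := by
  by_contra! hk
  have : a ^ k ∣ n := (pow_dvd_pow a hk).trans pow_padicValNat_dvd
  exact absurd (Nat.le_of_dvd hn this) (not_le.mpr hlt)

lemma pow_succ_dvd_of_mul_eq_mul_add_mul {a b x y z d : ℕ} (hab : a.Coprime b)
    (hx : a ^ d ∣ x) (hy : a ^ d ∣ y) (heq : a * x = a * y + b * z) : a ^ (d + 1) ∣ z := by
  have hax : a ^ (d + 1) ∣ a * x := pow_succ' a d ▸ mul_dvd_mul_left a hx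
  have hay : a ^ (d + 1) ∣ a * y := pow_succ' a d ▸ mul_dvd_mul_left a hy
  have hbz : a ^ (d + 1) ∣ b * z := (Nat.dvd_add_right hay).mp (heq ▸ hax)
  exact (hab.pow_left _).dvd_of_dvd_mul_left hbz

def valuationColoring (a k : ℕ) [NeZero k] (n : ℕ) : Fin k :=
  Fin.ofNat k (padicValNat a n)

lemma valuationColoring_not_monochromatic {a b k x y z : ℕ} [NeZero k] (hab : a.Coprime b)
    (hx : 0 < x) (hxa : x < a ^ k) (hy : 0 < y) (hya : y < a ^ k) (hz : 0 < z) (hza : z < a ^ k)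
    (heq : a * x = a * y + b * z) :
    ¬ (valuationColoring a k x = valuationColoring a k y ∧
      valuationColoring a k y = valuationColoring a k z) := by
  rintro ⟨hxy, hyz⟩
  rcases eq_or_ne a 1 with rfl | ha
  · rw [one_pow] at hxa
    omega
  have hval {m n : ℕ} (hm : 0 < m) (hma : m < a ^ k) (hn : 0 < n) (hna : n < a ^ k)
      (h : valuationColoring a k m = valuationColoring a k n) :
      padicValNat a m = padicValNat a n := by
    have := congrArg Fin.val h
    simp only [valuationColoring, Fin.val_ofNat] at this
    rwa [Nat.mod_eq_of_lt (padicValNat_lt_of_lt_pow hm hma),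
      Nat.mod_eq_of_lt (padicValNat_lt_of_lt_pow hn hna)] at this
  have hvy := hval hy hya hz hza hyz
  have hvx := (hval hx hxa hy hya hxy).trans hvy
  have hdvd : a ^ (padicValNat a z + 1) ∣ z :=
    pow_succ_dvd_of_mul_eq_mul_add_mul hab (hvx ▸ pow_padicValNat_dvd)
      (hvy ▸ pow_padicValNat_dvd) heq
  have := (Nat.pow_dvd_iff_le_padicValNat ha hz.ne').mp hdvd
  omega

theorem stmt_1_general (a b k : ℕ) (hk : 1 ≤ k)
    (hgcd : Nat.gcd a b = 1) :
    (∃ χ : ℕ → Fin k, ∀ x y z : ℕ,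
      1 ≤ x → x ≤ a ^ k - 1 → 1 ≤ y → y ≤ a ^ k - 1 → 1 ≤ z → z ≤ a ^ k - 1 →
      a * x = a * y + b * z → ¬ (χ x = χ y ∧ χ y = χ z)) ∧
    (∀ n : ℕ,
      (∀ χ : ℕ → Fin k, ∃ x y z : ℕ,
        1 ≤ x ∧ x ≤ n ∧ 1 ≤ y ∧ y ≤ n ∧ 1 ≤ z ∧ z ≤ n ∧
        a * x = a * y + b * z ∧ χ x = χ y ∧ χ y = χ z) →
      a ^ k ≤ n) := by
  have : NeZero k := ⟨by omega⟩
  have hfree : ∀ x y z : ℕ,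
      1 ≤ x → x ≤ a ^ k - 1 → 1 ≤ y → y ≤ a ^ k - 1 → 1 ≤ z → z ≤ a ^ k - 1 →
      a * x = a * y + b * z →
      ¬ (valuationColoring a k x = valuationColoring a k y ∧
        valuationColoring a k y = valuationColoring a k z) :=
    fun x y z hx hxa hy hya hz hza heq =>
      valuationColoring_not_monochromatic hgcd hx (by omega) hy (by omega) hz (by omega) heq
  refine ⟨⟨valuationColoring a k, hfree⟩, fun n hn => ?_⟩
  by_contra! hlt
  obtain ⟨x, y, z, hx, hxn, hy, hyn, hz, hzn, heq, hmono⟩ := hn (valuationColoring a k)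
  exact hfree x y z hx (by omega) hy (by omega) hz (by omega) heq hmono

/-- For coprime `a, b ≥ 1`, there is a `k`-coloring of `[1, a^k - 1]` with no
monochromatic positive solution to `a(x - y) = bz`; consequently
`R_k(a(x-y)=bz) ≥ a^k`. -/
theorem stmt_1 (a b k : ℕ) (ha : 1 ≤ a) (hb : 1 ≤ b) (hk : 1 ≤ k)
    (hgcd : Nat.gcd a b = 1) :
    (∃ χ : ℕ → Fin k, ∀ x y z : ℕ,
      1 ≤ x → x ≤ a ^ k - 1 → 1 ≤ y → y ≤ a ^ k - 1 → 1 ≤ z → z ≤ a ^ k - 1 →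
      a * x = a * y + b * z → ¬ (χ x = χ y ∧ χ y = χ z)) ∧
    (∀ n : ℕ,
      (∀ χ : ℕ → Fin k, ∃ x y z : ℕ,
        1 ≤ x ∧ x ≤ n ∧ 1 ≤ y ∧ y ≤ n ∧ 1 ≤ z ∧ z ≤ n ∧
        a * x = a * y + b * z ∧ χ x = χ y ∧ χ y = χ z) →
      a ^ k ≤ n) :=
  stmt_1_general a b k hk hgcd
end

section
/- For every integer a ≥ 2, there exists a 3-coloring of the interval [1, a³ + (a−1)² − 1] with no monochromatic positive-integer solution (x,y,z) to a(x − y) = (a−1)z. Consequently, R₃(a(x−y) = (a−1)z) ≥ a³ + (a−1)². -/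
set_option maxHeartbeats 2000000 in
private lemma key_lemma (b : ℕ) (hb : 1 ≤ b) :
    ∃ χ : ℕ → Fin 3, ∀ x y z : ℕ,
      1 ≤ x → x ≤ (b + 1) ^ 3 + b ^ 2 - 1 →
      1 ≤ y → y ≤ (b + 1) ^ 3 + b ^ 2 - 1 →
      1 ≤ z → z ≤ (b + 1) ^ 3 + b ^ 2 - 1 →
      (b + 1) * x = (b + 1) * y + b * z → ¬ (χ x = χ y ∧ χ y = χ z) := by
  classical
  refine ⟨fun i => if (b+1) ∣ i then (if (b+1)^2 ∣ i then (if (b+1)^3 ∣ i then 2 else 0) else 1)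
      else (if (b+1)*b ≤ i ∧ i ≤ (b+1)*b*(b+2) then 2 else 0), ?_⟩
  intro x y z hx1 hxB hy1 hyB hz1 hzB heq
  rintro ⟨hxy, hyz⟩
  simp only [] at hxy hyz
  have hBeq : (b + 1) ^ 3 + b ^ 2 - 1 = b^3 + 4*b^2 + 3*b := by
    have h1 : (b+1)^3 + b^2 = b^3 + 4*b^2 + 3*b + 1 := by ring
    rw [h1, Nat.add_sub_cancel]
  rw [hBeq] at hxB hyB hzB
  have hcop : Nat.Coprime (b+1) b := by
    rw [Nat.add_comm]
    exact Nat.coprime_add_self_left.mpr (Nat.coprime_one_left b)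
  -- structure of solutions
  have hylt : y < x := by
    have h1 : 1 ≤ b * z := Nat.mul_le_mul hb hz1
    have h2 : (b+1)*y < (b+1)*x := by linarith
    exact lt_of_mul_lt_mul_left h2 (Nat.zero_le _)
  obtain ⟨d, rfl⟩ : ∃ d, x = y + d := ⟨x - y, by omega⟩
  have hd : (b+1) * d = b * z := by
    have h2 : (b+1)*y + (b+1)*d = (b+1)*y + b*z := by rw [← Nat.mul_add]; exact heq
    exact Nat.add_left_cancel h2
  have hAz : (b+1) ∣ z := hcop.dvd_of_dvd_mul_left ⟨d, hd.symm⟩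
  obtain ⟨t, rfl⟩ := hAz
  have ht1 : 1 ≤ t := by
    rcases Nat.eq_zero_or_pos t with h | h
    · subst h; simp at hz1
    · exact h
  have hdt : d = b * t := by
    have h2 : (b+1) * d = (b+1) * (b * t) := by rw [hd]; ring
    exact Nat.eq_of_mul_eq_mul_left (by omega) h2
  subst hdt
  have htB : t ≤ b^2 + 3*b := by
    by_contra h
    push_neg at h
    have h2 : (b+1) * (b^2+3*b+1) ≤ (b+1) * t := Nat.mul_le_mul_left _ (by omega)
    have h3 : (b+1) * (b^2+3*b+1) = b^3 + 4*b^2 + 4*b + 1 := by ring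
    linarith
  have hdz : (b+1) ∣ (b+1) * t := dvd_mul_right _ _
  by_cases h2z : (b+1)^2 ∣ (b+1) * t
  · by_cases h3z : (b+1)^3 ∣ (b+1) * t
    · -- Case B : χ z = 2, t = (b+1)^2, z = (b+1)^3
      rw [if_pos hdz, if_pos h2z, if_pos h3z] at hyz
      have h2t : (b+1)^2 ∣ t := by
        have h : (b+1) * (b+1)^2 ∣ (b+1) * t := by
          have e : (b+1) * (b+1)^2 = (b+1)^3 := by ring
          rw [e]; exact h3z
        exact (Nat.mul_dvd_mul_iff_left (by omega : 0 < b+1)).mp h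
      obtain ⟨k, hk⟩ := h2t
      have hk1 : 1 ≤ k := by
        rcases Nat.eq_zero_or_pos k with h | h
        · rw [h, mul_zero] at hk; omega
        · exact h
      have hk2 : k ≤ 1 := by nlinarith [htB, hk]
      have htval : t = (b+1)^2 := by rw [hk, (by omega : k = 1), mul_one]
      have hbt : b * t = b^3 + 2*b^2 + b := by rw [htval]; ring
      have hyU : y ≤ 2*b^2 + 2*b := by linarith
      have hny : ¬ (b+1) ∣ y := by
        intro hay
        rw [if_pos hay] at hyz
        by_cases h2y : (b+1)^2 ∣ y
        · rw [if_pos h2y] at hyz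
          by_cases h3y : (b+1)^3 ∣ y
          · have hyL := Nat.le_of_dvd (by omega) h3y
            nlinarith
          · rw [if_neg h3y] at hyz; exact absurd hyz (by decide)
        · rw [if_neg h2y] at hyz; exact absurd hyz (by decide)
      rw [if_neg hny] at hyz
      by_cases hyI : (b+1)*b ≤ y ∧ y ≤ (b+1)*b*(b+2)
      · rw [if_neg hny, if_pos hyI] at hxy
        have hnx : ¬ (b+1) ∣ (y + b*t) := by
          intro hax
          have hd2 : (b+1) ∣ b*t := by
            refine ⟨b*(b+1), ?_⟩
            rw [htval]; ring
          exact hny ((Nat.dvd_add_right hd2).mp (by rwa [Nat.add_comm y (b*t)] at hax))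
        rw [if_neg hnx] at hxy
        by_cases hxI : (b+1)*b ≤ y + b*t ∧ y + b*t ≤ (b+1)*b*(b+2)
        · have e1 : (b+1)*b*(b+2) = b^3 + 3*b^2 + 2*b := by ring
          have e2 : (b+1)*b = b^2 + b := by ring
          have hyv : y = (b+1)*b := by
            have h1 := hyI.1
            have h2 := hxI.2
            linarith
          exact hny ⟨b, by linarith [hyv, e2]⟩
        · rw [if_neg hxI] at hxy; exact absurd hxy (by decide)
      · rw [if_neg hyI] at hyz; exact absurd hyz (by decide)
    · -- Case C : χ z = 0, t = (b+1) * s with ¬(b+1) ∣ s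
      rw [if_pos hdz, if_pos h2z, if_neg h3z] at hyz
      have hat : (b+1) ∣ t := by
        have h : (b+1)*(b+1) ∣ (b+1)*t := by
          have e : (b+1)*(b+1) = (b+1)^2 := by ring
          rw [e]; exact h2z
        exact (Nat.mul_dvd_mul_iff_left (by omega : 0 < b+1)).mp h
      obtain ⟨s, rfl⟩ := hat
      have hns : ¬ (b+1) ∣ s := by
        intro h
        apply h3z
        obtain ⟨u, rfl⟩ := h
        exact ⟨u, by ring⟩
      have hs1 : 1 ≤ s := by
        rcases Nat.eq_zero_or_pos s with h | h
        · subst h; simp at ht1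
        · exact h
      have hsb : s ≤ b := by
        have h : s ≤ b + 1 := by nlinarith [htB]
        rcases Nat.lt_or_ge s (b+1) with h' | h'
        · omega
        · exact absurd ⟨1, by omega⟩ hns
      by_cases hay : (b+1) ∣ y
      · rw [if_pos hay] at hyz
        by_cases h2y : (b+1)^2 ∣ y
        · have hax : (b+1) ∣ y + b*((b+1)*s) := Nat.dvd_add hay ⟨b*s, by ring⟩
          rw [if_pos hax] at hxy
          by_cases h2x : (b+1)^2 ∣ y + b*((b+1)*s)
          · have hsub : (b+1)^2 ∣ b*((b+1)*s) := by
              have h := Nat.dvd_sub h2x h2y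
              rwa [Nat.add_sub_cancel_left] at h
            have h' : (b+1) ∣ b * s := by
              have e : b*((b+1)*s) = (b+1)*(b*s) := by ring
              have e2 : (b+1)^2 = (b+1)*(b+1) := by ring
              rw [e, e2] at hsub
              exact (Nat.mul_dvd_mul_iff_left (by omega : 0 < b+1)).mp hsub
            exact hns (hcop.dvd_of_dvd_mul_left h')
          · rw [if_neg h2x, if_pos hay, if_pos h2y] at hxy
            by_cases h3y : (b+1)^3 ∣ y
            · rw [if_pos h3y] at hxy; exact absurd hxy (by decide)
            · rw [if_neg h3y] at hxy; exact absurd hxy (by decide)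
        · rw [if_neg h2y] at hyz; exact absurd hyz (by decide)
      · rw [if_neg hay] at hyz
        have hI : ¬ ((b+1)*b ≤ y ∧ y ≤ (b+1)*b*(b+2)) := by
          intro h
          rw [if_pos h] at hyz; exact absurd hyz (by decide)
        push_neg at hI
        have hnx : ¬ (b+1) ∣ y + b*((b+1)*s) := by
          intro h
          have hd2 : (b+1) ∣ b*((b+1)*s) := ⟨b*s, by ring⟩
          exact hay ((Nat.dvd_add_right hd2).mp (by rwa [Nat.add_comm y (b*((b+1)*s))] at h))
        rw [if_neg hnx] at hxy
        have hxI : ¬ ((b+1)*b ≤ y + b*((b+1)*s) ∧ y + b*((b+1)*s) ≤ (b+1)*b*(b+2)) := by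
          intro h
          rw [if_pos h, if_neg hay, if_neg (by push_neg; exact hI)] at hxy
          exact absurd hxy (by decide)
        push_neg at hxI
        clear hxy hyz heq hd
        have hPl : (b+1)*b ≤ b*((b+1)*s) := by
          calc (b+1)*b = b*((b+1)*1) := by ring
          _ ≤ b*((b+1)*s) := Nat.mul_le_mul_left _ (Nat.mul_le_mul_left _ hs1)
        have hPu : b*((b+1)*s) ≤ (b+1)*b*b := by
          calc b*((b+1)*s) ≤ b*((b+1)*b) :=
                Nat.mul_le_mul_left _ (Nat.mul_le_mul_left _ hsb)
          _ = (b+1)*b*b := by ring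
        have e1 : (b+1)*b*(b+2) = b^3 + 3*b^2 + 2*b := by ring
        have e2 : (b+1)*b = b^2 + b := by ring
        have e3 : (b+1)*b*b = b^3 + b^2 := by ring
        rcases Nat.lt_or_ge y ((b+1)*b) with hyl | hyg
        · have hxl := hxI (by linarith)
          linarith
        · have hyu := hI hyg
          linarith
  · -- Case A : χ z = 1
    rw [if_pos hdz, if_neg h2z] at hyz
    have hay : (b+1) ∣ y := by
      by_contra h
      rw [if_neg h] at hyz
      by_cases hI : (b+1)*b ≤ y ∧ y ≤ (b+1)*b*(b+2)
      · rw [if_pos hI] at hyz; exact absurd hyz (by decide)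
      · rw [if_neg hI] at hyz; exact absurd hyz (by decide)
    rw [if_pos hay] at hyz
    have h2y : ¬ (b+1)^2 ∣ y := by
      intro h
      rw [if_pos h] at hyz
      by_cases h3 : (b+1)^3 ∣ y
      · rw [if_pos h3] at hyz; exact absurd hyz (by decide)
      · rw [if_neg h3] at hyz; exact absurd hyz (by decide)
    rw [if_pos hay, if_neg h2y] at hxy
    have hax : (b+1) ∣ y + b*t := by
      by_contra h
      rw [if_neg h] at hxy
      by_cases hI : (b+1)*b ≤ y + b*t ∧ y + b*t ≤ (b+1)*b*(b+2)
      · rw [if_pos hI] at hxy; exact absurd hxy (by decide)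
      · rw [if_neg hI] at hxy; exact absurd hxy (by decide)
    have hbt : (b+1) ∣ b*t := by
      have h := Nat.dvd_sub hax hay
      rwa [Nat.add_sub_cancel_left] at h
    have hat : (b+1) ∣ t := hcop.dvd_of_dvd_mul_left hbt
    apply h2z
    obtain ⟨u, rfl⟩ := hat
    exact ⟨u, by ring⟩

/-- For `a ≥ 2`, there is a 3-coloring of `[1, a³ + (a-1)² - 1]` with no
monochromatic positive solution to `a(x - y) = (a-1)z`; consequently
`R₃(a(x-y)=(a-1)z) ≥ a³ + (a-1)²`. -/
theorem stmt_2 (a : ℕ) (ha : 2 ≤ a) :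
    (∃ χ : ℕ → Fin 3, ∀ x y z : ℕ,
      1 ≤ x → x ≤ a ^ 3 + (a - 1) ^ 2 - 1 →
      1 ≤ y → y ≤ a ^ 3 + (a - 1) ^ 2 - 1 →
      1 ≤ z → z ≤ a ^ 3 + (a - 1) ^ 2 - 1 →
      a * x = a * y + (a - 1) * z → ¬ (χ x = χ y ∧ χ y = χ z)) ∧
    (∀ n : ℕ,
      (∀ χ : ℕ → Fin 3, ∃ x y z : ℕ,
        1 ≤ x ∧ x ≤ n ∧ 1 ≤ y ∧ y ≤ n ∧ 1 ≤ z ∧ z ≤ n ∧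
        a * x = a * y + (a - 1) * z ∧ χ x = χ y ∧ χ y = χ z) →
      a ^ 3 + (a - 1) ^ 2 ≤ n) := by
  obtain ⟨b, rfl⟩ : ∃ b, a = b + 1 := ⟨a - 1, by omega⟩
  have hb : 1 ≤ b := by omega
  simp only [Nat.add_sub_cancel]
  constructor
  · exact key_lemma b hb
  · intro n hn
    by_contra hlt
    push_neg at hlt
    obtain ⟨χ, hχ⟩ := key_lemma b hb
    obtain ⟨x, y, z, hx1, hxn, hy1, hyn, hz1, hzn, heq, h1, h2⟩ := hn χ
    have hle : n ≤ (b + 1) ^ 3 + b ^ 2 - 1 := Nat.le_sub_one_of_lt hlt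
    exact hχ x y z hx1 (hxn.trans hle) hy1 (hyn.trans hle) hz1 (hzn.trans hle) heq ⟨h1, h2⟩
end

section
/- For all integers m ≥ 3 and k ≥ 3, the equation x₁ + x₂ + ⋯ + x_{m−1} = ⌈(m−1)^{(k−1)/(k−2)}⌉ · x_m is not k-regular; i.e., there is a k-coloring of the positive integers with no monochromatic positive-integer solution to this equation. -/
open Real Finset

/-- Interval bounds for the floor of a real logarithm of a positive natural. -/
lemma logb_interval (b : ℝ) (hb : 1 < b) (n : ℕ) (hn : 0 < n) :
    b ^ (⌊Real.logb b n⌋.toNat) ≤ (n : ℝ) ∧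
      (n : ℝ) < b ^ (⌊Real.logb b n⌋.toNat + 1) := by
  have hn1 : (1 : ℝ) ≤ (n : ℝ) := by exact_mod_cast hn
  have hL0 : 0 ≤ Real.logb b n := Real.logb_nonneg hb hn1
  have hfl0 : 0 ≤ ⌊Real.logb b n⌋ := Int.floor_nonneg.mpr hL0
  have hcast : ((⌊Real.logb b n⌋.toNat : ℕ) : ℝ) = (⌊Real.logb b n⌋ : ℝ) := by
    exact_mod_cast Int.toNat_of_nonneg hfl0
  have hb0 : (0 : ℝ) < b := lt_trans one_pos hb
  have hlogb : b ^ Real.logb b n = (n : ℝ) :=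
    Real.rpow_logb hb0 (ne_of_gt hb) (by exact_mod_cast hn)
  constructor
  · calc b ^ (⌊Real.logb b n⌋.toNat)
        = b ^ ((⌊Real.logb b n⌋.toNat : ℕ) : ℝ) := (Real.rpow_natCast _ _).symm
      _ ≤ b ^ Real.logb b n := by
          apply Real.rpow_le_rpow_of_exponent_le hb.le
          rw [hcast]; exact Int.floor_le _
      _ = (n : ℝ) := hlogb
  · calc (n : ℝ) = b ^ Real.logb b n := hlogb.symm
      _ < b ^ (((⌊Real.logb b n⌋.toNat + 1 : ℕ)) : ℝ) := by
          apply Real.rpow_lt_rpow_of_exponent_lt hb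
          push_cast [hcast]
          exact Int.lt_floor_add_one _
      _ = b ^ (⌊Real.logb b n⌋.toNat + 1) := Real.rpow_natCast _ _

/-- For all `m, k ≥ 3` the equation
`x₁ + ⋯ + x_{m-1} = ⌈(m-1)^{(k-1)/(k-2)}⌉ · x_m` is not `k`-regular. -/
theorem stmt_5 (m k : ℕ) (hm : 3 ≤ m) (hk : 3 ≤ k) :
    ∃ χ : ℕ → Fin k, ∀ (x : Fin (m - 1) → ℕ) (y : ℕ),
      (∀ i, 0 < x i) → 0 < y →
      (∑ i, x i) = ⌈((m : ℝ) - 1) ^ (((k : ℝ) - 1) / ((k : ℝ) - 2))⌉₊ * y →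
      ¬ (∀ i, χ (x i) = χ y) := by
  have hkR : (3 : ℝ) ≤ (k : ℝ) := by exact_mod_cast hk
  have hmR : (3 : ℝ) ≤ (m : ℝ) := by exact_mod_cast hm
  have hk2 : (0 : ℝ) < (k : ℝ) - 2 := by linarith
  have hk1 : (0 : ℝ) < (k : ℝ) - 1 := by linarith
  set r : ℝ := ((m : ℝ) - 1) ^ (((k : ℝ) - 1) / ((k : ℝ) - 2)) with hr_def
  set a : ℕ := ⌈r⌉₊ with ha_def
  have hm1 : (2 : ℝ) ≤ (m : ℝ) - 1 := by linarith
  have hm1nn : (0 : ℝ) ≤ (m : ℝ) - 1 := by linarith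
  have hexp1 : (1 : ℝ) ≤ ((k : ℝ) - 1) / ((k : ℝ) - 2) := by
    rw [le_div_iff₀ hk2]; linarith
  have hr_ge : (m : ℝ) - 1 ≤ r := by
    calc (m : ℝ) - 1 = ((m : ℝ) - 1) ^ (1 : ℝ) := (Real.rpow_one _).symm
      _ ≤ r := Real.rpow_le_rpow_of_exponent_le (by linarith) hexp1
  have hra : r ≤ (a : ℝ) := Nat.le_ceil r
  have haR : (2 : ℝ) ≤ (a : ℝ) := by linarith
  have ha0 : (0 : ℝ) < (a : ℝ) := by linarith
  set b : ℝ := (a : ℝ) ^ ((1 : ℝ) / ((k : ℝ) - 1)) with hb_def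
  have hb1 : 1 < b := by
    rw [hb_def, Real.one_lt_rpow_iff_of_pos ha0]
    exact Or.inl ⟨by linarith, by positivity⟩
  have hb0 : (0 : ℝ) < b := lt_trans one_pos hb1
  -- b ^ (k-1) = a
  have hbk : b ^ (k - 1 : ℕ) = (a : ℝ) := by
    have h1 : ((k - 1 : ℕ) : ℝ) = (k : ℝ) - 1 := by
      have : (1 : ℕ) ≤ k := by omega
      push_cast [this]; ring
    calc b ^ (k - 1 : ℕ) = b ^ (((k - 1 : ℕ) : ℝ)) := (Real.rpow_natCast _ _).symm
      _ = ((a : ℝ) ^ ((1 : ℝ) / ((k : ℝ) - 1))) ^ ((k : ℝ) - 1) := by rw [h1, hb_def]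
      _ = (a : ℝ) ^ (((1 : ℝ) / ((k : ℝ) - 1)) * ((k : ℝ) - 1)) := by
          rw [← Real.rpow_mul ha0.le]
      _ = (a : ℝ) ^ (1 : ℝ) := by
          congr 1
          field_simp
      _ = (a : ℝ) := Real.rpow_one _
  -- (m-1) * b ≤ a
  have h1 : ((m : ℝ) - 1) * b ≤ (a : ℝ) := by
    have e0 : (m : ℝ) - 1 = r ^ (((k : ℝ) - 2) / ((k : ℝ) - 1)) := by
      rw [hr_def, ← Real.rpow_mul hm1nn]
      rw [show ((k : ℝ) - 1) / ((k : ℝ) - 2) * (((k : ℝ) - 2) / ((k : ℝ) - 1)) = 1 by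
        field_simp]
      exact (Real.rpow_one _).symm
    have e1 : (m : ℝ) - 1 ≤ (a : ℝ) ^ (((k : ℝ) - 2) / ((k : ℝ) - 1)) := by
      rw [e0]
      apply Real.rpow_le_rpow (by positivity) hra (by positivity)
    have e2 : ((m : ℝ) - 1) * b ≤ (a : ℝ) ^ (((k : ℝ) - 2) / ((k : ℝ) - 1)) *
        (a : ℝ) ^ ((1 : ℝ) / ((k : ℝ) - 1)) := by
      apply mul_le_mul e1 le_rfl hb0.le (by positivity)
    calc ((m : ℝ) - 1) * b ≤ _ := e2
      _ = (a : ℝ) ^ (((k : ℝ) - 2) / ((k : ℝ) - 1) + (1 : ℝ) / ((k : ℝ) - 1)) := by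
          rw [← Real.rpow_add ha0]
      _ = (a : ℝ) ^ (1 : ℝ) := by
          congr 1
          field_simp
          ring
      _ = (a : ℝ) := Real.rpow_one _
  -- the coloring
  have hkpos : 0 < k := by omega
  refine ⟨fun n => ⟨(⌊Real.logb b n⌋.toNat) % k, Nat.mod_lt _ hkpos⟩, ?_⟩
  intro x y hx hy hsum hcol
  set f : ℕ → ℕ := fun n => ⌊Real.logb b n⌋.toNat with hf_def
  -- color equality as nat mod equality
  have hmodeq : ∀ i, f (x i) % k = f y % k := by
    intro i
    have := hcol i
    exact congrArg Fin.val this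
  -- max index
  have hne : Nonempty (Fin (m - 1)) := ⟨⟨0, by omega⟩⟩
  obtain ⟨i₀, -, hi₀⟩ := Finset.exists_max_image Finset.univ (fun i => f (x i))
    ⟨Classical.arbitrary _, Finset.mem_univ _⟩
  set J : ℕ := f (x i₀) with hJ_def
  set j : ℕ := f y with hj_def
  set S : ℝ := ((∑ i, x i : ℕ) : ℝ) with hS_def
  have hSeq : S = (a : ℝ) * (y : ℝ) := by
    rw [hS_def, hsum]; push_cast; ring
  -- bounds on x i and y
  have hxb : ∀ i, b ^ (f (x i)) ≤ (x i : ℝ) ∧ (x i : ℝ) < b ^ (f (x i) + 1) :=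
    fun i => logb_interval b hb1 (x i) (hx i)
  have hyb : b ^ j ≤ (y : ℝ) ∧ (y : ℝ) < b ^ (j + 1) := logb_interval b hb1 y hy
  -- lower bound on S
  have hSlow : b ^ J ≤ S := by
    calc b ^ J ≤ (x i₀ : ℝ) := (hxb i₀).1
      _ ≤ S := by
        rw [hS_def]
        push_cast
        exact Finset.single_le_sum (f := fun i => ((x i : ℕ) : ℝ)) (fun i _ => by positivity) (Finset.mem_univ i₀)
  -- upper bound on S
  have hcard : ((Finset.univ : Finset (Fin (m - 1))).card : ℝ) = (m : ℝ) - 1 := by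
    rw [Finset.card_univ, Fintype.card_fin]
    have : (1 : ℕ) ≤ m := by omega
    push_cast [this]; ring
  have hSup : S < ((m : ℝ) - 1) * b ^ (J + 1) := by
    have : S < ∑ _i : Fin (m - 1), b ^ (J + 1) := by
      rw [hS_def]
      push_cast
      apply Finset.sum_lt_sum_of_nonempty (Finset.univ_nonempty)
      intro i _
      calc (x i : ℝ) < b ^ (f (x i) + 1) := (hxb i).2
        _ ≤ b ^ (J + 1) := by
          apply pow_le_pow_right₀ hb1.le
          have := hi₀ i (Finset.mem_univ i)
          omega
    calc S < ∑ _i : Fin (m - 1), b ^ (J + 1) := this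
      _ = ((m : ℝ) - 1) * b ^ (J + 1) := by
        rw [Finset.sum_const, nsmul_eq_mul, hcard]
  -- bounds on S via y
  have hSy_low : (a : ℝ) * b ^ j ≤ S := by
    rw [hSeq]
    exact mul_le_mul_of_nonneg_left hyb.1 ha0.le
  have hSy_up : S < (a : ℝ) * b ^ (j + 1) := by
    rw [hSeq]
    exact mul_lt_mul_of_pos_left hyb.2 ha0
  -- mod congruence splits into cases
  have hJj : J % k = j % k := hmodeq i₀
  have hcases : J = j ∨ J + k ≤ j ∨ j + k ≤ J := by
    rcases lt_trichotomy J j with h | h | h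
    · right; left
      have hd : k ∣ j - J := (Nat.modEq_iff_dvd' h.le).mp hJj
      have := Nat.le_of_dvd (by omega) hd
      omega
    · left; exact h
    · right; right
      have hd : k ∣ J - j := (Nat.modEq_iff_dvd' h.le).mp hJj.symm
      have := Nat.le_of_dvd (by omega) hd
      omega
  have hbpow : ∀ n : ℕ, (0 : ℝ) < b ^ n := fun n => pow_pos hb0 n
  rcases hcases with h | h | h
  · -- J = j : S < (m-1) b^{j+1} = (m-1) b · b^j ≤ a b^j ≤ S
    have h2 : ((m : ℝ) - 1) * b ^ (J + 1) = (((m : ℝ) - 1) * b) * b ^ J := by ring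
    have h3 : (((m : ℝ) - 1) * b) * b ^ J ≤ (a : ℝ) * b ^ J :=
      mul_le_mul_of_nonneg_right h1 (hbpow J).le
    rw [h] at h2 h3 hSup
    linarith [hSy_low]
  · -- J + k ≤ j : S ≥ a b^j ≥ a b^{J+k} = a·a·b^{J+1} ≥ (m-1) b^{J+1} > S
    have hjk : b ^ (J + k) ≤ b ^ j := pow_le_pow_right₀ hb1.le h
    have hsplit : b ^ (J + k) = b ^ (J + 1) * b ^ (k - 1 : ℕ) := by
      rw [← pow_add]
      congr 1
      omega
    have hma : (m : ℝ) - 1 ≤ (a : ℝ) * (a : ℝ) := by nlinarith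
    have : ((m : ℝ) - 1) * b ^ (J + 1) ≤ (a : ℝ) * b ^ j := by
      calc ((m : ℝ) - 1) * b ^ (J + 1) ≤ ((a : ℝ) * (a : ℝ)) * b ^ (J + 1) :=
            mul_le_mul_of_nonneg_right hma (hbpow _).le
        _ = (a : ℝ) * (b ^ (J + 1) * (a : ℝ)) := by ring
        _ = (a : ℝ) * b ^ (J + k) := by rw [hsplit, hbk]
        _ ≤ (a : ℝ) * b ^ j := mul_le_mul_of_nonneg_left hjk ha0.le
    linarith [hSy_low, hSup]
  · -- j + k ≤ J : S < a b^{j+1} ≤ b^{j+k} ≤ b^J ≤ S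
    have hjk : b ^ (j + k) ≤ b ^ J := pow_le_pow_right₀ hb1.le h
    have hsplit : b ^ (j + k) = b ^ (j + 1) * b ^ (k - 1 : ℕ) := by
      rw [← pow_add]
      congr 1
      omega
    have : (a : ℝ) * b ^ (j + 1) ≤ b ^ J := by
      calc (a : ℝ) * b ^ (j + 1) = b ^ (j + 1) * b ^ (k - 1 : ℕ) := by rw [hbk]; ring
        _ = b ^ (j + k) := hsplit.symm
        _ ≤ b ^ J := hjk
    linarith [hSy_up, hSlow]
end

section
/- For every integer m ≥ 3, the equation x₁ + x₂ + ⋯ + x_{m−1} = (m−1)² x_m has degree of regularity exactly 2: it is 2-regular but not 3-regular. -/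
/-!
Two-regularity. Set `D = k + 1` and look only at solutions `(a, b, …, b; y)`, i.e. at
`a + k b = D² y`. If a 2-coloring has no monochromatic solution of this shape, then
multiplication by each of `D`, `D + 1`, `k² + k + 1` and `D² + 1` switches the color of every
positive integer (each is read off a solution in which the other two terms have the color of `n`),
so multiplication by a product of two of them preserves it. The solution
`(D (k² + k + 1), D (D² + 1); D²)` then has all three terms of the color of `1`.

Non-3-regularity. If `D` positive integers sum to `D² y`, one of them lies in `[D y, D² y]`, so
its base-`D` logarithm exceeds that of `y` by 1 or 2; coloring `n` by `⌊log_D n⌋ mod 3` therefore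
leaves no solution monochromatic.
-/

open Finset

theorem Fin.two_eq_of_ne_of_ne {a b c : Fin 2} (hab : a ≠ b) (hcb : c ≠ b) : a = c := by
  revert a b c; decide

def IsMonochromaticSolution {α : Type*} (χ : ℕ → α) (k a b y : ℕ) : Prop :=
  0 < a ∧ 0 < b ∧ 0 < y ∧ a + k * b = (k + 1) ^ 2 * y ∧ χ a = χ y ∧ χ b = χ y

theorem IsMonochromaticSolution.exists_sum_eq_sq_mul {α : Type*} {χ : ℕ → α} {k a b y : ℕ}
    (h : IsMonochromaticSolution χ k a b y) :
    ∃ (x : Fin (k + 1) → ℕ) (y : ℕ),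
      (∀ i, 0 < x i) ∧ 0 < y ∧ (∑ i, x i) = (k + 1) ^ 2 * y ∧ ∀ i, χ (x i) = χ y := by
  obtain ⟨ha, hb, hy, hsum, hχa, hχb⟩ := h
  refine ⟨Fin.cons a fun _ => b, y, Fin.cases ha fun _ => hb, hy, ?_,
    Fin.cases hχa fun _ => hχb⟩
  simpa only [Fin.sum_cons, Fin.sum_const, smul_eq_mul] using hsum

section TwoColoring

variable {χ : ℕ → Fin 2}

def FlipsColor (χ : ℕ → Fin 2) (u : ℕ) : Prop := ∀ n, 0 < n → χ (u * n) ≠ χ n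

def FixesColor (χ : ℕ → Fin 2) (u : ℕ) : Prop := ∀ n, 0 < n → χ (u * n) = χ n

theorem FlipsColor.mul {u v : ℕ} (hu : FlipsColor χ u) (hv : FlipsColor χ v) (hv₀ : 0 < v) :
    FixesColor χ (u * v) := fun n hn => by
  rw [mul_assoc]
  exact Fin.two_eq_of_ne_of_ne (hu (v * n) (by positivity)) (hv n hn).symm

theorem FixesColor.flipsColor_of_mul {u v : ℕ} (hv : FixesColor χ v)
    (hvu : FlipsColor χ (v * u)) (hu : 0 < u) : FlipsColor χ u := fun n hn => by
  rw [← hv (u * n) (by positivity), ← mul_assoc]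
  exact hvu n hn

section NoMonochromaticSolution

variable {k : ℕ} (hfree : ∀ a b y, ¬ IsMonochromaticSolution χ k a b y)
include hfree

theorem flipsColor_succ : FlipsColor χ (k + 1) := fun n hn h =>
  hfree _ _ n ⟨by positivity, by positivity, hn, by ring, h, h⟩

theorem flipsColor_add_two : FlipsColor χ (k + 2) := fun n hn h =>
  hfree n _ n ⟨hn, by positivity, hn, by ring, rfl, h⟩

theorem flipsColor_sq_add_succ : FlipsColor χ (k ^ 2 + k + 1) := fun n hn h =>
  hfree _ n n ⟨by positivity, hn, hn, by ring, h, rfl⟩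

theorem flipsColor_succ_sq_add_one : FlipsColor χ ((k + 1) ^ 2 + 1) := by
  have hsq : FixesColor χ ((k + 1) * (k + 1)) :=
    (flipsColor_succ hfree).mul (flipsColor_succ hfree) k.succ_pos
  have hmul : FixesColor χ ((k + 1) * (k + 2)) :=
    (flipsColor_succ hfree).mul (flipsColor_add_two hfree) (by positivity)
  refine hsq.flipsColor_of_mul (fun n hn h => ?_) (by positivity)
  -- `D²(D² + 1) n + k D² n = D² · D(D + 1) n`, and `D² n`, `D(D + 1) n` have the color of `n`
  exact hfree _ _ ((k + 1) * (k + 2) * n)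
    ⟨by positivity, by positivity, by positivity, by ring, h.trans (hmul n hn).symm,
      (hsq n hn).trans (hmul n hn).symm⟩

theorem false_of_forall_not_isMonochromaticSolution : False := by
  have hsucc := flipsColor_succ hfree
  have ha := hsucc.mul (flipsColor_sq_add_succ hfree) (by positivity) 1 one_pos
  have hb := hsucc.mul (flipsColor_succ_sq_add_one hfree) (by positivity) 1 one_pos
  have hy := hsucc.mul hsucc k.succ_pos 1 one_pos
  exact hfree _ _ _ ⟨by positivity, by positivity, by positivity, by ring, ha.trans hy.symm,
    hb.trans hy.symm⟩

end NoMonochromaticSolution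

theorem exists_monochromatic_sum_eq_sq_mul (k : ℕ) (χ : ℕ → Fin 2) :
    ∃ (x : Fin (k + 1) → ℕ) (y : ℕ),
      (∀ i, 0 < x i) ∧ 0 < y ∧ (∑ i, x i) = (k + 1) ^ 2 * y ∧ ∀ i, χ (x i) = χ y := by
  by_contra hnone
  exact false_of_forall_not_isMonochromaticSolution (χ := χ) (k := k) fun _ _ _ h =>
    hnone h.exists_sum_eq_sq_mul

end TwoColoring

theorem Nat.log_mem_of_mul_le_of_le_sq_mul {D x y : ℕ} (hD : 1 < D) (hy : y ≠ 0)
    (hlo : D * y ≤ x) (hhi : x ≤ D ^ 2 * y) :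
    Nat.log D y + 1 ≤ Nat.log D x ∧ Nat.log D x ≤ Nat.log D y + 2 := by
  have hlog₁ := Nat.log_mul_base hD hy
  have hlog₂ := Nat.log_mul_base hD (mul_ne_zero hy (by omega : D ≠ 0))
  refine ⟨hlog₁ ▸ Nat.log_mono_right (by linarith), ?_⟩
  calc Nat.log D x ≤ Nat.log D (y * D * D) := Nat.log_mono_right (by linarith)
    _ = Nat.log D y + 2 := by rw [hlog₂, hlog₁]

theorem exists_log_mem_of_sum_eq_sq_mul {D : ℕ} (hD : 1 < D) (x : Fin D → ℕ) {y : ℕ}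
    (hy : y ≠ 0) (hsum : ∑ i, x i = D ^ 2 * y) :
    ∃ i, Nat.log D y + 1 ≤ Nat.log D (x i) ∧ Nat.log D (x i) ≤ Nat.log D y + 2 := by
  have hne : (univ : Finset (Fin D)).Nonempty := univ_nonempty_iff.mpr ⟨⟨0, by omega⟩⟩
  have hsum_const : ∑ _i : Fin D, D * y ≤ ∑ i, x i := by
    rw [sum_const, card_univ, Fintype.card_fin, smul_eq_mul, hsum, ← mul_assoc, sq]
  obtain ⟨i, -, hi⟩ := exists_le_of_sum_le hne hsum_const
  exact ⟨i, Nat.log_mem_of_mul_le_of_le_sq_mul hD hy hi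
    (hsum ▸ single_le_sum (fun j _ => Nat.zero_le (x j)) (mem_univ i))⟩

def logColoring (D n : ℕ) : Fin 3 := ⟨Nat.log D n % 3, Nat.mod_lt _ (by norm_num)⟩

theorem logColoring_not_monochromatic {D : ℕ} (hD : 1 < D) (x : Fin D → ℕ) {y : ℕ}
    (hy : 0 < y) (hsum : ∑ i, x i = D ^ 2 * y) :
    ¬ ∀ i, logColoring D (x i) = logColoring D y := fun hall => by
  obtain ⟨i, hlo, hhi⟩ := exists_log_mem_of_sum_eq_sq_mul hD x hy.ne' hsum
  have hmod := congrArg Fin.val (hall i)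
  simp only [logColoring] at hmod
  omega

/-- For `m ≥ 3`, the equation `x₁ + ⋯ + x_{m-1} = (m-1)² x_m` is 2-regular but
not 3-regular, i.e. it has degree of regularity exactly 2. -/
theorem stmt_6 (m : ℕ) (hm : 3 ≤ m) :
    (∀ χ : ℕ → Fin 2, ∃ (x : Fin (m - 1) → ℕ) (y : ℕ),
      (∀ i, 0 < x i) ∧ 0 < y ∧ (∑ i, x i) = (m - 1) ^ 2 * y ∧
      (∀ i, χ (x i) = χ y)) ∧
    (∃ χ : ℕ → Fin 3, ∀ (x : Fin (m - 1) → ℕ) (y : ℕ),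
      (∀ i, 0 < x i) → 0 < y →
      (∑ i, x i) = (m - 1) ^ 2 * y →
      ¬ (∀ i, χ (x i) = χ y)) := by
  obtain ⟨k, rfl⟩ : ∃ k, m = k + 2 := ⟨m - 2, by omega⟩
  exact ⟨exists_monochromatic_sum_eq_sq_mul k,
    ⟨logColoring (k + 1), fun x _ _ hy hsum =>
      logColoring_not_monochromatic (by omega) x hy hsum⟩⟩
end

section
/- There exists a 3-coloring of the positive integers with no monochromatic positive-integer solution to x + y = 4z; i.e., R₃(x + y = 4z) = ∞ and the equation x + y = 4z is not 3-regular. -/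
/-!
Colour `n` by `⌊log₂ n⌋ mod 3`. If `x + y = 4z`, then the larger of `x` and `y` lies in
`[2z, 4z]`, so its binary logarithm exceeds that of `z` by one or two, and the two colours differ.
-/

namespace Nat

theorem log_add_one_le_of_mul_le {b n m : ℕ} (hb : 1 < b) (hn : n ≠ 0) (h : n * b ≤ m) :
    log b n + 1 ≤ log b m :=
  log_mul_base hb hn ▸ log_mono_right h

theorem log_le_add_two_of_le_mul_mul {b n m : ℕ} (hb : 1 < b) (hn : n ≠ 0) (h : m ≤ n * b * b) :
    log b m ≤ log b n + 2 := by
  have hnb : n * b ≠ 0 := Nat.mul_ne_zero hn (by omega)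
  calc log b m ≤ log b (n * b * b) := log_mono_right h
    _ = log b n + 2 := by rw [log_mul_base hb hnb, log_mul_base hb hn]

end Nat

theorem two_mul_le_max_le_four_mul {x y z : ℕ} (h : x + y = 4 * z) :
    z * 2 ≤ max x y ∧ max x y ≤ z * 2 * 2 := by
  omega

def log2Coloring (n : ℕ) : Fin 3 :=
  ⟨Nat.log 2 n % 3, Nat.mod_lt _ (by norm_num)⟩

theorem log2Coloring_eq_iff {m n : ℕ} :
    log2Coloring m = log2Coloring n ↔ Nat.log 2 m % 3 = Nat.log 2 n % 3 :=
  Fin.ext_iff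

/-- The equation `x + y = 4z` is not 3-regular. -/
theorem stmt_9 :
    ∃ χ : ℕ → Fin 3, ∀ x y z : ℕ, 0 < x → 0 < y → 0 < z →
      x + y = 4 * z → ¬ (χ x = χ y ∧ χ y = χ z) := by
  refine ⟨log2Coloring, fun x y z _ _ hz hsum ⟨hxy, hyz⟩ => ?_⟩
  rw [log2Coloring_eq_iff] at hxy hyz
  obtain ⟨hlow, hhigh⟩ := two_mul_le_max_le_four_mul hsum
  have hlog_max : Nat.log 2 (max x y) = max (Nat.log 2 x) (Nat.log 2 y) :=
    Nat.log_monotone.map_max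
  have h₁ := Nat.log_add_one_le_of_mul_le one_lt_two hz.ne' hlow
  have h₂ := Nat.log_le_add_two_of_le_mul_mul one_lt_two hz.ne' hhigh
  omega
end

section
/- There exists a 3-coloring of the positive integers with no monochromatic positive-integer solution to 2(x + y) = z; i.e., the equation 2x + 2y = z is not 3-regular. -/
/-!
Colour `n` by `⌊log₂ n⌋ mod 3`. If `x` and `y` lie in the dyadic blocks `[2^a, 2^(a+1))` and
`[2^b, 2^(b+1))`, then `x + y` lies in block `max a b` or `max a b + 1`, so `z = 2 (x + y)` lies
one or two blocks above `max a b`, and `z` cannot share a colour with both `x` and `y`.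
-/

namespace Nat

theorem max_log_le_log_add (b x y : ℕ) : max (log b x) (log b y) ≤ log b (x + y) :=
  max_le (log_mono_right (le_add_right x y)) (log_mono_right (le_add_left y x))

theorem log_add_le_max_log_add_one (b x y : ℕ) :
    log b (x + y) ≤ max (log b x) (log b y) + 1 := by
  rcases le_or_gt b 1 with hb | hb
  · simp [log_of_left_le_one hb]
  rcases eq_or_ne (x + y) 0 with hxy | hxy
  · simp [hxy]
  set m := max (log b x) (log b y)
  have hx : x < b ^ (m + 1) :=
    (lt_pow_succ_log_self hb x).trans_le (Nat.pow_le_pow_right hb.le (by omega))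
  have hy : y < b ^ (m + 1) :=
    (lt_pow_succ_log_self hb y).trans_le (Nat.pow_le_pow_right hb.le (by omega))
  refine Nat.lt_add_one_iff.mp (log_lt_of_lt_pow hxy ?_)
  calc x + y < 2 * b ^ (m + 1) := by omega
    _ ≤ b * b ^ (m + 1) := Nat.mul_le_mul_right _ hb
    _ = b ^ (m + 1 + 1) := Nat.pow_succ'.symm

theorem log_two_mul {n : ℕ} (hn : n ≠ 0) : log 2 (2 * n) = log 2 n + 1 := by
  rw [Nat.mul_comm, log_mul_base one_lt_two hn]

end Nat

def dyadicColoring (n : ℕ) : Fin 3 :=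
  ⟨Nat.log 2 n % 3, Nat.mod_lt _ three_pos⟩

/-- The equation `2(x + y) = z` is not 3-regular. -/
theorem stmt_10 :
    ∃ χ : ℕ → Fin 3, ∀ x y z : ℕ, 0 < x → 0 < y → 0 < z →
      2 * (x + y) = z → ¬ (χ x = χ y ∧ χ y = χ z) := by
  refine ⟨dyadicColoring, ?_⟩
  rintro x y _ hx - - rfl ⟨hxy, hyz⟩
  simp only [dyadicColoring, Fin.mk.injEq] at hxy hyz
  have hz := Nat.log_two_mul (n := x + y) (by omega)
  have lower := Nat.max_log_le_log_add 2 x y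
  have upper := Nat.log_add_le_max_log_add_one 2 x y
  omega
end

section
/- There exists a 3-coloring of the positive integers with no monochromatic positive-integer solution to x + 2y = 4z. -/
lemma v2_add_eq_min (m n : ℕ) (hm : m ≠ 0) (hn : n ≠ 0)
    (h : padicValNat 2 m ≠ padicValNat 2 n) :
    padicValNat 2 (m + n) = min (padicValNat 2 m) (padicValNat 2 n) := by
  have : Fact (Nat.Prime 2) := ⟨Nat.prime_two⟩
  have hq : (m : ℚ) ≠ 0 := Nat.cast_ne_zero.mpr hm
  have hr : (n : ℚ) ≠ 0 := Nat.cast_ne_zero.mpr hn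
  have hqr : (m : ℚ) + n ≠ 0 := by positivity
  have hval : padicValRat 2 m ≠ padicValRat 2 n := by
    rw [padicValRat.of_nat, padicValRat.of_nat]
    exact_mod_cast h
  have := padicValRat.add_eq_min (p := 2) hqr hq hr hval
  rw [show ((m : ℚ) + n) = ((m + n : ℕ) : ℚ) by push_cast; ring] at this
  rw [padicValRat.of_nat, padicValRat.of_nat, padicValRat.of_nat] at this
  exact_mod_cast this

/-- There is a 3-coloring of the positive integers with no monochromatic
positive solution to `x + 2y = 4z`. -/
theorem stmt_11 :
    ∃ χ : ℕ → Fin 3, ∀ x y z : ℕ, 0 < x → 0 < y → 0 < z →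
      x + 2 * y = 4 * z → ¬ (χ x = χ y ∧ χ y = χ z) := by
  have : Fact (Nat.Prime 2) := ⟨Nat.prime_two⟩
  refine ⟨fun n => ⟨padicValNat 2 n % 3, Nat.mod_lt _ (by norm_num)⟩,
    fun x y z hx hy hz heq ⟨h1, h2⟩ => ?_⟩
  have e1 : padicValNat 2 x % 3 = padicValNat 2 y % 3 := congrArg Fin.val h1
  have e2 : padicValNat 2 y % 3 = padicValNat 2 z % 3 := congrArg Fin.val h2
  set a := padicValNat 2 x with ha
  have hb : padicValNat 2 (2 * y) = 1 + padicValNat 2 y := by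
    rw [padicValNat.mul two_ne_zero hy.ne', padicValNat.self one_lt_two]
  have hc : padicValNat 2 (4 * z) = 2 + padicValNat 2 z := by
    rw [show (4 : ℕ) = 2 ^ 2 by norm_num,
      padicValNat.mul (by norm_num) hz.ne', padicValNat.prime_pow]
  have hab : a ≠ padicValNat 2 (2 * y) := by rw [hb]; omega
  have key := v2_add_eq_min x (2 * y) hx.ne' (by omega) hab
  rw [heq, hc] at key
  rw [hb] at key hab
  omega
end

section
/- Let a, b, c be nonzero integers and suppose some prime p satisfies that v_p(a), v_p(b), v_p(c) are pairwise distinct modulo 3. Then the equation ax + by = cz is not 3-regular: there is a 3-coloring of the positive integers with no monochromatic positive-integer solution. -/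
/-- If some prime `p` has `v_p(a), v_p(b), v_p(c)` pairwise distinct modulo 3,
then `ax + by = cz` is not 3-regular. -/
theorem stmt_12 (a b c : ℤ) (ha : a ≠ 0) (hb : b ≠ 0) (hc : c ≠ 0)
    (p : ℕ) (hp : p.Prime)
    (hab : padicValInt p a % 3 ≠ padicValInt p b % 3)
    (hac : padicValInt p a % 3 ≠ padicValInt p c % 3)
    (hbc : padicValInt p b % 3 ≠ padicValInt p c % 3) :
    ∃ χ : ℕ → Fin 3, ∀ x y z : ℕ, 0 < x → 0 < y → 0 < z →
      a * x + b * y = c * z → ¬ (χ x = χ y ∧ χ y = χ z) := by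
  haveI : Fact p.Prime := ⟨hp⟩
  refine ⟨fun n => ⟨padicValNat p n % 3, Nat.mod_lt _ (by norm_num)⟩, ?_⟩
  rintro x y z hx hy hz heq ⟨hxy, hyz⟩
  simp only [Fin.mk.injEq] at hxy hyz
  have hxz : (x : ℤ) ≠ 0 := by exact_mod_cast hx.ne'
  have hyz' : (y : ℤ) ≠ 0 := by exact_mod_cast hy.ne'
  have hzz : (z : ℤ) ≠ 0 := by exact_mod_cast hz.ne'
  have hq : ((a * x : ℤ) : ℚ) ≠ 0 := by exact_mod_cast mul_ne_zero ha hxz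
  have hr : ((b * y : ℤ) : ℚ) ≠ 0 := by exact_mod_cast mul_ne_zero hb hyz'
  have hcz : ((c * z : ℤ) : ℚ) ≠ 0 := by exact_mod_cast mul_ne_zero hc hzz
  have hsum : ((a * x : ℤ) : ℚ) + ((b * y : ℤ) : ℚ) = ((c * z : ℤ) : ℚ) := by
    exact_mod_cast heq
  have vq : padicValRat p ((a * x : ℤ) : ℚ) =
      (padicValInt p a + padicValNat p x : ℤ) := by
    rw [padicValRat.of_int, padicValInt.mul ha hxz, padicValInt.of_nat]; push_cast; ring
  have vr : padicValRat p ((b * y : ℤ) : ℚ) =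
      (padicValInt p b + padicValNat p y : ℤ) := by
    rw [padicValRat.of_int, padicValInt.mul hb hyz', padicValInt.of_nat]; push_cast; ring
  have vs : padicValRat p ((c * z : ℤ) : ℚ) =
      (padicValInt p c + padicValNat p z : ℤ) := by
    rw [padicValRat.of_int, padicValInt.mul hc hzz, padicValInt.of_nat]; push_cast; ring
  have hvqr : padicValRat p ((a * x : ℤ) : ℚ) ≠ padicValRat p ((b * y : ℤ) : ℚ) := by
    rw [vq, vr]; intro h
    have : padicValInt p a + padicValNat p x = padicValInt p b + padicValNat p y := by
      exact_mod_cast h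
    omega
  have key := padicValRat.add_eq_min (p := p) (hsum ▸ hcz) hq hr hvqr
  rw [hsum, vs, vq, vr] at key
  rcases le_total ((padicValInt p a + padicValNat p x : ℤ))
      ((padicValInt p b + padicValNat p y : ℤ)) with h | h
  · rw [min_eq_left h] at key
    have : padicValInt p c + padicValNat p z = padicValInt p a + padicValNat p x := by
      exact_mod_cast key
    omega
  · rw [min_eq_right h] at key
    have : padicValInt p c + padicValNat p z = padicValInt p b + padicValNat p y := by
      exact_mod_cast key
    omega
end

section
/- Suppose m ≥ 3 and a₁, …, aₘ are nonzero integers such that some aᵢ > 0 and some aⱼ < 0. Then the equation a₁x₁ + ⋯ + aₘxₘ = 0 is 2-regular: every 2-coloring of the positive integers contains a monochromatic positive-integer solution. -/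
private lemma fin2br : ∀ a b c : Fin 2, a ≠ b → c ≠ b → a = c := by decide

/-- Key lemma: for positive `p q r`, every 2-coloring of the positive integers
admits a monochromatic solution of `p*x + q*y = r*z`. -/
lemma keyL (p q r : ℕ) (hp : 0 < p) (hq : 0 < q) (hr : 0 < r) (χ : ℕ → Fin 2) :
    ∃ x y z : ℕ, 0 < x ∧ 0 < y ∧ 0 < z ∧ p * x + q * y = r * z ∧ χ x = χ y ∧ χ x = χ z := by
  by_contra hcon
  push_neg at hcon
  set D := p + q with hD
  have hDpos : 0 < D := by omega
  have H : ∀ x y z : ℕ, 0 < x → 0 < y → 0 < z → p*x + q*y = r*z → χ x = χ y → χ x = χ z →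
      False := fun x y z hx hy hz he h1 h2 => hcon x y z hx hy hz he h1 h2
  -- D1 : χ(r x) ≠ χ(D x)
  have D1 : ∀ x : ℕ, 0 < x → χ (r*x) ≠ χ (D*x) := by
    intro x hx hEq
    exact H (r*x) (r*x) (D*x) (Nat.mul_pos hr hx) (Nat.mul_pos hr hx) (Nat.mul_pos hDpos hx)
      (by rw [hD]; ring) rfl hEq
  -- RI
  have RI : ∀ a b w : ℕ, 0 < a → 0 < b → 0 < w → a + b = r*w →
      χ (q*a) = χ (p*b) → χ (q*a) = χ (p*(q*w)) → False := by
    intro a b w ha hb hw hab h1 h2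
    apply H (q*a) (p*b) (p*(q*w)) (Nat.mul_pos hq ha) (Nat.mul_pos hp hb)
      (Nat.mul_pos hp (Nat.mul_pos hq hw)) ?_ h1 h2
    calc p*(q*a) + q*(p*b) = p*q*(a+b) := by ring
    _ = p*q*(r*w) := by rw [hab]
    _ = r*(p*(q*w)) := by ring
  -- RJ
  have RJ : ∀ α β : ℕ, 0 < α → 0 < β → χ (q*(D*α)) = χ (p*(D*β)) →
      χ (p*(q*(α+β))) = χ (q*(D*α)) := by
    intro α β hα hβ hpre
    have e1 : χ (q*(r*α)) ≠ χ (q*(D*α)) := by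
      have h := D1 (q*α) (Nat.mul_pos hq hα)
      rwa [show r*(q*α) = q*(r*α) by ring, show D*(q*α) = q*(D*α) by ring] at h
    have e2 : χ (p*(r*β)) ≠ χ (q*(D*α)) := by
      have h := D1 (p*β) (Nat.mul_pos hp hβ)
      rw [show r*(p*β) = p*(r*β) by ring, show D*(p*β) = p*(D*β) by ring] at h
      rwa [← hpre] at h
    have e3 : χ (q*(r*α)) = χ (p*(r*β)) := fin2br _ _ _ e1 e2
    by_contra hne
    have e4 : χ (q*(r*α)) = χ (p*(q*(α+β))) := fin2br _ _ _ e1 hne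
    exact H (q*(r*α)) (p*(r*β)) (p*(q*(α+β)))
      (Nat.mul_pos hq (Nat.mul_pos hr hα)) (Nat.mul_pos hp (Nat.mul_pos hr hβ))
      (Nat.mul_pos hp (Nat.mul_pos hq (by omega)))
      (by ring) e3 e4
  -- the two chains χ(q D² w) and χ(p D² w) agree
  have PQ : ∀ w : ℕ, 0 < w → χ (q*(D*(D*w))) = χ (p*(D*(D*w))) := by
    intro w hw
    by_contra hne
    have f1 : χ (q*(D*(r*w))) ≠ χ (q*(D*(D*w))) := by
      have h := D1 (q*(D*w)) (Nat.mul_pos hq (Nat.mul_pos hDpos hw))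
      rwa [show r*(q*(D*w)) = q*(D*(r*w)) by ring, show D*(q*(D*w)) = q*(D*(D*w)) by ring] at h
    have f2 : χ (q*(D*(r*w))) = χ (p*(D*(D*w))) := fin2br _ _ _ f1 (Ne.symm hne)
    have hJ := RJ (r*w) (D*w) (Nat.mul_pos hr hw) (Nat.mul_pos hDpos hw) f2
    -- hJ : χ (p*(q*(r*w + D*w))) = χ (q*(D*(r*w)))
    have f3 : χ (p*(D*(r*w))) ≠ χ (p*(D*(D*w))) := by
      have h := D1 (p*(D*w)) (Nat.mul_pos hp (Nat.mul_pos hDpos hw))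
      rwa [show r*(p*(D*w)) = p*(D*(r*w)) by ring, show D*(p*(D*w)) = p*(D*(D*w)) by ring] at h
    have f4 : χ (p*(r*(r*w))) ≠ χ (p*(D*(r*w))) := by
      have h := D1 (p*(r*w)) (Nat.mul_pos hp (Nat.mul_pos hr hw))
      rwa [show r*(p*(r*w)) = p*(r*(r*w)) by ring, show D*(p*(r*w)) = p*(D*(r*w)) by ring] at h
    have f5 : χ (p*(r*(r*w))) = χ (p*(D*(D*w))) := fin2br _ _ _ f4 (Ne.symm f3)
    have hJ' : χ (p*(q*((D+r)*w))) = χ (q*(D*(r*w))) := by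
      rwa [show p*(q*(r*w + D*w)) = p*(q*((D+r)*w)) by ring] at hJ
    exact RI (D*(r*w)) (r*(r*w)) ((D+r)*w)
      (Nat.mul_pos hDpos (Nat.mul_pos hr hw)) (Nat.mul_pos hr (Nat.mul_pos hr hw))
      (Nat.mul_pos (by omega) hw) (by ring)
      (f2.trans f5.symm) hJ'.symm
  -- θ
  set θ : ℕ → Fin 2 := fun n => χ (p*(D*(D*(D*n)))) with hθ
  have θq : ∀ n : ℕ, 0 < n → χ (q*(D*(D*(D*n)))) = θ n := by
    intro n hn
    have := PQ (D*n) (Nat.mul_pos hDpos hn)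
    rw [hθ]
    exact this
  have A2 : ∀ α β : ℕ, 0 < α → 0 < β → θ α = θ β →
      χ (p*(q*(D*(D*α) + D*(D*β)))) = θ α := by
    intro α β hα hβ hab
    have pre : χ (q*(D*(D*(D*α)))) = χ (p*(D*(D*(D*β)))) := by
      rw [θq α hα]
      rw [hab, hθ]
    have h := RJ (D*(D*α)) (D*(D*β))
      (Nat.mul_pos hDpos (Nat.mul_pos hDpos hα)) (Nat.mul_pos hDpos (Nat.mul_pos hDpos hβ)) pre
    rwa [θq α hα] at h
  have REFL : ∀ u e : ℕ, 0 < u → θ u = θ (u + 2*e) → θ (u + e) = θ u := by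
    intro u e hu h
    have h1 := A2 u (u+2*e) hu (by omega) h
    have h2 := A2 (u+e) (u+e) (by omega) (by omega) rfl
    rw [show p*(q*(D*(D*u) + D*(D*(u+2*e)))) = p*(q*(D*(D*(u+e)) + D*(D*(u+e)))) by ring] at h1
    exact h2.symm.trans h1
  have D1θ : ∀ n : ℕ, 0 < n → θ (r*n) ≠ θ (D*n) := by
    intro n hn
    have h := D1 (p*(D*(D*(D*n))))
      (Nat.mul_pos hp (Nat.mul_pos hDpos (Nat.mul_pos hDpos (Nat.mul_pos hDpos hn))))
    rw [show r*(p*(D*(D*(D*n)))) = p*(D*(D*(D*(r*n)))) by ring,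
        show D*(p*(D*(D*(D*n)))) = p*(D*(D*(D*(D*n)))) by ring] at h
    rw [hθ]
    exact h
  -- tail constancy machinery
  have stepConst : ∀ N : ℕ, (∀ j, N ≤ j → θ j = θ (j+1)) → ∀ x, N ≤ x → θ x = θ N := by
    intro N hstep x hx
    induction x, hx using Nat.le_induction with
    | base => rfl
    | succ n hn ih => rw [← hstep n hn]; exact ih
  have tailFalse : ∀ N : ℕ, 0 < N → (∀ x, N ≤ x → θ x = θ N) → False := by
    intro N hN hconst
    have h1 : θ (r*N) = θ N := hconst _ (Nat.le_mul_of_pos_left _ hr)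
    have h2 : θ (D*N) = θ N := hconst _ (Nat.le_mul_of_pos_left _ hDpos)
    exact D1θ N hN (h1.trans h2.symm)
  by_cases hA : ∀ j, 1 ≤ j → θ j = θ (j+1)
  · exact tailFalse 1 one_pos (fun x hx => stepConst 1 hA x hx)
  · push_neg at hA
    obtain ⟨i₀, hi₀1, hi₀⟩ := hA
    by_cases hB : ∀ j, i₀ + 1 ≤ j → θ j = θ (j+1)
    · exact tailFalse (i₀+1) (by omega) (fun x hx => stepConst (i₀+1) hB x hx)
    · push_neg at hB
      classical
      have hex : ∃ j, i₀ + 1 ≤ j ∧ θ j ≠ θ (j+1) := hB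
      set j₀ := Nat.find hex with hj₀def
      obtain ⟨hj₀ge, hj₀ne⟩ := Nat.find_spec hex
      have hmin : ∀ k, i₀+1 ≤ k → k < j₀ → θ k = θ (k+1) := by
        intro k hk hkj
        by_contra hne
        exact (Nat.find_min hex hkj) ⟨hk, hne⟩
      have hblock : ∀ k, i₀+1 ≤ k → k ≤ j₀ → θ k = θ (i₀+1) := by
        intro k hk
        induction k, hk using Nat.le_induction with
        | base => intro _; rfl
        | succ n hn ih =>
          intro hn1
          rw [← hmin n hn (by omega)]
          exact ih (by omega)
      have hj₀β : θ j₀ = θ (i₀+1) := hblock j₀ hj₀ge le_rfl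
      have hj₁β : θ (j₀+1) ≠ θ (i₀+1) := fun h => hj₀ne (hj₀β.trans h.symm)
      have hji : θ (j₀+1) = θ i₀ := fin2br _ _ _ hj₁β hi₀
      obtain ⟨e, he⟩ : ∃ e, j₀ + 1 = i₀ + 2*e ∨ j₀ + 1 = i₀ + 2*e + 1 :=
        ⟨(j₀ + 1 - i₀)/2, by omega⟩
      rcases he with he | he
      · have he1 : 1 ≤ e := by omega
        have hrefl : θ (i₀ + e) = θ i₀ := by
          apply REFL i₀ e (by omega)
          rw [show i₀ + 2*e = j₀ + 1 by omega]
          exact hji.symm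
        have hin : θ (i₀ + e) = θ (i₀+1) := hblock (i₀+e) (by omega) (by omega)
        exact hi₀ (hrefl.symm.trans hin)
      · have he1 : 1 ≤ e := by omega
        by_cases hc : θ (j₀+2) = θ j₀
        · have h := REFL j₀ 1 (by omega) (by rw [show j₀ + 2*1 = j₀+2 by ring]; exact hc.symm)
          exact hj₀ne h.symm
        · have hc2 : θ (j₀+2) = θ i₀ := by
            apply fin2br _ _ _ _ hi₀
            intro h
            exact hc (h.trans hj₀β.symm) |>.elim
          have hrefl : θ (i₀ + (e+1)) = θ i₀ := by
            apply REFL i₀ (e+1) (by omega)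
            rw [show i₀ + 2*(e+1) = j₀ + 2 by omega]
            exact hc2.symm
          have hin : θ (i₀ + (e+1)) = θ (i₀+1) := hblock _ (by omega) (by omega)
          exact hi₀ (hrefl.symm.trans hin)

/-- Auxiliary: the case where there are two distinct indices with positive coefficient. -/
lemma aux_main (m : ℕ) (a : Fin m → ℤ) (ha : ∀ i, a i ≠ 0)
    (i₀ : Fin m) (hi₀ : 0 < a i₀)
    (i₁ : Fin m) (hi₁ : i₁ ≠ i₀) (hpos1 : 0 < a i₁)
    (hneg : ∃ j, a j < 0) (χ : ℕ → Fin 2) :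
    ∃ x : Fin m → ℕ, (∀ i, 0 < x i) ∧ (∑ i, a i * (x i : ℤ)) = 0 ∧
      (∀ i j : Fin m, χ (x i) = χ (x j)) := by
  classical
  set P : Finset (Fin m) := Finset.univ.filter (fun i => 0 < a i) with hP
  set NN : Finset (Fin m) := Finset.univ.filter (fun i => ¬ 0 < a i) with hNN
  have hi₀P : i₀ ∈ P := Finset.mem_filter.mpr ⟨Finset.mem_univ _, hi₀⟩
  have hi₁P : i₁ ∈ P.erase i₀ := Finset.mem_erase.mpr ⟨hi₁, Finset.mem_filter.mpr ⟨Finset.mem_univ _, hpos1⟩⟩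
  set Sq : ℤ := ∑ i ∈ P.erase i₀, a i with hSqdef
  set Sr : ℤ := ∑ i ∈ NN, (-a i) with hSrdef
  have hSq : 0 < Sq := Finset.sum_pos
    (fun i hi => (Finset.mem_filter.mp (Finset.mem_of_mem_erase hi)).2) ⟨i₁, hi₁P⟩
  have hSr : 0 < Sr := by
    obtain ⟨j, hj⟩ := hneg
    have hjN : j ∈ NN := Finset.mem_filter.mpr ⟨Finset.mem_univ _, by omega⟩
    exact Finset.sum_pos (fun i hi => by
      have h2 := (Finset.mem_filter.mp hi).2
      have := ha i
      omega) ⟨j, hjN⟩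
  obtain ⟨x, y, z, hx, hy, hz, heq, hxy, hxz⟩ :=
    keyL (a i₀).toNat Sq.toNat Sr.toNat (by omega) (by omega) (by omega) χ
  refine ⟨fun i => if i = i₀ then x else if 0 < a i then y else z, ?_, ?_, ?_⟩
  · intro i
    by_cases h1 : i = i₀
    · simpa [h1] using hx
    · by_cases h2 : 0 < a i <;> simp [h1, h2, hy, hz]
  · -- the sum
    have heqZ : (a i₀) * (x : ℤ) + Sq * y = Sr * z := by
      have := congrArg (fun t : ℕ => (t : ℤ)) heq
      push_cast at this
      rwa [Int.toNat_of_nonneg hi₀.le, Int.toNat_of_nonneg hSq.le, Int.toNat_of_nonneg hSr.le]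
        at this
    have hsplit : (∑ i, a i * ((if i = i₀ then x else if 0 < a i then y else z : ℕ) : ℤ))
        = ∑ i ∈ P, a i * ((if i = i₀ then x else if 0 < a i then y else z : ℕ) : ℤ)
          + ∑ i ∈ NN, a i * ((if i = i₀ then x else if 0 < a i then y else z : ℕ) : ℤ) :=
      (Finset.sum_filter_add_sum_filter_not Finset.univ _ _).symm
    rw [hsplit]
    have hPsum : ∑ i ∈ P, a i * ((if i = i₀ then x else if 0 < a i then y else z : ℕ) : ℤ)
        = a i₀ * x + Sq * y := by
      rw [← Finset.add_sum_erase P _ hi₀P]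
      simp only [if_pos rfl]
      congr 1
      rw [hSqdef, Finset.sum_mul]
      apply Finset.sum_congr rfl
      intro i hi
      have h1 : i ≠ i₀ := Finset.ne_of_mem_erase hi
      have h2 : 0 < a i := (Finset.mem_filter.mp (Finset.mem_of_mem_erase hi)).2
      simp [h1, h2]
    have hNsum : ∑ i ∈ NN, a i * ((if i = i₀ then x else if 0 < a i then y else z : ℕ) : ℤ)
        = - (Sr * z) := by
      rw [hSrdef, Finset.sum_mul, ← Finset.sum_neg_distrib]
      apply Finset.sum_congr rfl
      intro i hi
      have h2 : ¬ 0 < a i := (Finset.mem_filter.mp hi).2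
      have h1 : i ≠ i₀ := by intro h; rw [h] at h2; exact h2 hi₀
      rw [if_neg h1, if_neg h2]
      ring
    rw [hPsum, hNsum, heqZ]
    ring
  · -- colors
    have hcol : ∀ i, χ (if i = i₀ then x else if 0 < a i then y else z) = χ x := by
      intro i
      by_cases h1 : i = i₀
      · simp [h1]
      · by_cases h2 : 0 < a i <;> simp [h1, h2, hxy.symm, hxz.symm]
    intro i j
    rw [hcol i, hcol j]

/-- Rado: a linear homogeneous equation in `m ≥ 3` variables with nonzero
integer coefficients, not all of the same sign, is 2-regular. -/
theorem stmt_14 (m : ℕ) (hm : 3 ≤ m) (a : Fin m → ℤ) (ha : ∀ i, a i ≠ 0)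
    (hpos : ∃ i, 0 < a i) (hneg : ∃ j, a j < 0) :
    ∀ χ : ℕ → Fin 2, ∃ x : Fin m → ℕ,
      (∀ i, 0 < x i) ∧ (∑ i, a i * (x i : ℤ)) = 0 ∧
      (∀ i j : Fin m, χ (x i) = χ (x j)) := by
  intro χ
  classical
  by_cases htwo : ∃ i j : Fin m, i ≠ j ∧ 0 < a i ∧ 0 < a j
  · obtain ⟨i₀, i₁, hne, h0, h1⟩ := htwo
    exact aux_main m a ha i₀ h0 i₁ hne.symm h1 hneg χ
  · push_neg at htwo
    obtain ⟨ip, hip⟩ := hpos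
    have hallneg : ∀ i, i ≠ ip → a i < 0 := by
      intro i hne
      rcases lt_trichotomy (a i) 0 with h | h | h
      · exact h
      · exact absurd h (ha i)
      · have := htwo i ip hne h; omega
    have hcard : 1 < (Finset.univ.erase ip).card := by
      rw [Finset.card_erase_of_mem (Finset.mem_univ _), Finset.card_univ, Fintype.card_fin]
      omega
    obtain ⟨j₁, hj₁, j₂, hj₂, hjj⟩ := Finset.one_lt_card.mp hcard
    obtain ⟨x, hx, hsum, hcol⟩ := aux_main m (fun i => -a i)
      (fun i h => ha i (neg_eq_zero.mp h))
      j₁ (by have := hallneg j₁ (Finset.ne_of_mem_erase hj₁); show (0:ℤ) < -a j₁; omega)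
      j₂ hjj.symm (by have := hallneg j₂ (Finset.ne_of_mem_erase hj₂); show (0:ℤ) < -a j₂; omega)
      ⟨ip, by show -a ip < 0; omega⟩ χ
    refine ⟨x, hx, ?_, hcol⟩
    have : ∑ i, -(a i * (x i : ℤ)) = 0 := by
      rw [← hsum]
      apply Finset.sum_congr rfl
      intro i _
      ring
    rw [Finset.sum_neg_distrib] at this
    omega
end

section
/- If a linear homogeneous equation c₁x₁ + ⋯ + cₘxₘ = 0 with nonzero integer coefficients has a nonempty subset of its coefficients summing to zero, then for every k ≥ 1 and every k-coloring of the positive integers there is a monochromatic positive-integer solution (i.e., the equation is regular). -/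
/-!
Let `s` be the zero-sum set of coefficients and `B` the sum of the others. If `B = 0` the
constant solution works. Otherwise some `c j` with `j ∈ s` has sign opposite to `B`, and
`x j = y + |B| w`, `x i = y` on the rest of `s`, `x i = |c j| w` off `s` is a solution because
`c j |B| + B |c j| = 0`. So it suffices that for all `p` and `q > 0` every finite colouring of
`ℕ` has `y, w > 0` with `y`, `y + p w`, `q w` of one colour.

This goes by induction on the number of colours. By compactness the case of one colour fewer is
already realised inside some `[1, N]`. Van der Waerden gives a monochromatic progression
`y + a i`, `i ≤ N p`, of colour `c₀`. Either some `q a i` with `1 ≤ i ≤ N` has colour `c₀`, and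
`y, y + p a i, q a i` is the triple, or `n ↦ χ (q a n)` avoids `c₀` on `[1, N]`, and a triple for
that colouring, scaled by `q a`, is a triple for `χ`.
-/

open Filter Finset

theorem exists_finset_forall_exists_mono {α κ : Type*} [Finite κ] (𝒮 : Set (Finset α))
    (h : ∀ χ : α → κ, ∃ S ∈ 𝒮, ∃ c, ∀ a ∈ S, χ a = c) :
    ∃ T : Finset α, ∀ χ : α → κ, ∃ S ∈ 𝒮, S ⊆ T ∧ ∃ c, ∀ a ∈ S, χ a = c := by
  by_contra! hT
  choose χs hχs using hT
  let U := Ultrafilter.of (atTop : Filter (Finset α))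
  have hlim (a : α) : ∃ c, ∀ᶠ T in U, χs T a = c :=
    Ultrafilter.eventually_exists_iff.1 (.of_forall fun T => ⟨χs T a, rfl⟩)
  choose χ hχ using hlim
  obtain ⟨S, hS, c, hc⟩ := h χ
  have hbig : ∀ᶠ T in U, S ≤ T := Ultrafilter.of_le _ (eventually_ge_atTop S)
  obtain ⟨T, hST, hagree⟩ := (hbig.and ((eventually_all_finset S).2 fun a _ => hχ a)).exists
  obtain ⟨a, ha, hne⟩ := hχs T S hS hST c
  exact hne ((hagree a ha).trans (hc a ha))

def IsMonoTriple {κ : Type*} (χ : ℕ → κ) (p q y w : ℕ) : Prop :=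
  0 < y ∧ 0 < w ∧ χ (y + p * w) = χ y ∧ χ (q * w) = χ y

theorem exists_bound_isMonoTriple {κ : Type*} [Finite κ] {p q : ℕ}
    (h : ∀ χ : ℕ → κ, ∃ y w, IsMonoTriple χ p q y w) :
    ∃ N, ∀ χ : ℕ → κ, ∃ y w, IsMonoTriple χ p q y w ∧ y + p * w ≤ N ∧ q * w ≤ N := by
  let 𝒮 : Set (Finset ℕ) := {S | ∃ y w, 0 < y ∧ 0 < w ∧ S = {y, y + p * w, q * w}}
  obtain ⟨T, hT⟩ := exists_finset_forall_exists_mono (κ := κ) 𝒮 fun χ => by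
    obtain ⟨y, w, hy, hw, h₁, h₂⟩ := h χ
    exact ⟨_, ⟨y, w, hy, hw, rfl⟩, χ y, by simp [h₁, h₂]⟩
  obtain ⟨N, hN⟩ := T.exists_nat_subset_range
  refine ⟨N, fun χ => ?_⟩
  obtain ⟨_, ⟨y, w, hy, hw, rfl⟩, hST, c, hc⟩ := hT χ
  have hbound := hST.trans hN
  simp only [insert_subset_iff, singleton_subset_iff, mem_range] at hbound
  simp only [mem_insert, mem_singleton, forall_eq_or_imp, forall_eq] at hc
  exact ⟨y, w, ⟨hy, hw, hc.2.1.trans hc.1.symm, hc.2.2.trans hc.1.symm⟩, by omega, by omega⟩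

theorem exists_isMonoTriple_of_bound {κ : Type*} [Finite κ] [Nontrivial κ] {p q N : ℕ}
    (hq : 0 < q)
    (hN : ∀ (c₀ : κ) (χ : ℕ → {c // c ≠ c₀}),
      ∃ y w, IsMonoTriple χ p q y w ∧ y + p * w ≤ N ∧ q * w ≤ N)
    (χ : ℕ → κ) : ∃ y w, IsMonoTriple χ p q y w := by
  classical
  obtain ⟨a, ha, b, c₀, hAP⟩ :=
    Combinatorics.exists_mono_homothetic_copy (range (N * p + 1)) fun n => χ (n + 1)
  have hAP' (i : ℕ) (hi : i ≤ N * p) : χ (b + 1 + a * i) = c₀ := by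
    have h := hAP i (mem_range.2 (Nat.lt_succ_of_le hi))
    rwa [smul_eq_mul, add_assoc, add_comm] at h
  have hy : χ (b + 1) = c₀ := by simpa using hAP' 0 (Nat.zero_le _)
  by_cases hcase : ∃ i, 0 < i ∧ i ≤ N ∧ χ (q * (a * i)) = c₀
  · obtain ⟨i, hi₀, hiN, hi⟩ := hcase
    refine ⟨b + 1, a * i, b.succ_pos, Nat.mul_pos ha hi₀, ?_, by rw [hi, hy]⟩
    rw [show b + 1 + p * (a * i) = b + 1 + a * (i * p) by ring,
      hAP' _ (Nat.mul_le_mul_right p hiN), hy]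
  push Not at hcase
  obtain ⟨d, hd⟩ := exists_ne c₀
  let χ' : ℕ → {c // c ≠ c₀} := fun n =>
    if h : χ (q * (a * n)) = c₀ then ⟨d, hd⟩ else ⟨_, h⟩
  have hχ' (n : ℕ) (hn₀ : 0 < n) (hnN : n ≤ N) : (χ' n : κ) = χ (q * (a * n)) := by
    simp [χ', hcase n hn₀ hnN]
  obtain ⟨y, w, ⟨hy, hw, h₁, h₂⟩, hb₁, hb₂⟩ := hN c₀ χ'
  refine ⟨q * (a * y), q * (a * w), by positivity, by positivity, ?_, ?_⟩
  · rw [show q * (a * y) + p * (q * (a * w)) = q * (a * (y + p * w)) by ring,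
      ← hχ' _ (by omega) hb₁, ← hχ' y hy (by omega), h₁]
  · rw [show q * (q * (a * w)) = q * (a * (q * w)) by ring,
      ← hχ' _ (by positivity) hb₂, ← hχ' y hy (by omega), h₂]

theorem exists_isMonoTriple {κ : Type*} [Finite κ] {p q : ℕ} (hq : 0 < q) (χ : ℕ → κ) :
    ∃ y w, IsMonoTriple χ p q y w := by
  induction hk : Nat.card κ using Nat.strong_induction_on generalizing κ with
  | _ k ih =>
  rcases subsingleton_or_nontrivial κ with hκ | hκ
  · exact ⟨1, 1, one_pos, one_pos, Subsingleton.elim _ _, Subsingleton.elim _ _⟩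
  have hbound (c₀ : κ) : ∃ N, ∀ χ' : ℕ → {c // c ≠ c₀},
      ∃ y w, IsMonoTriple χ' p q y w ∧ y + p * w ≤ N ∧ q * w ≤ N :=
    exists_bound_isMonoTriple fun χ' =>
      ih _ (hk ▸ Finite.card_subtype_lt (not_not.2 rfl)) χ' rfl
  choose N hN using hbound
  obtain ⟨M, hM⟩ := Finite.exists_le N
  refine exists_isMonoTriple_of_bound hq (N := M) (fun c₀ χ' => ?_) χ
  obtain ⟨y, w, h, hb₁, hb₂⟩ := hN c₀ χ'
  exact ⟨y, w, h, hb₁.trans (hM c₀), hb₂.trans (hM c₀)⟩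

theorem exists_mem_mul_neg_of_sum_eq_zero {ι R : Type*} [CommRing R] [LinearOrder R]
    [IsStrictOrderedRing R] {s : Finset ι} {f : ι → R} (hs : s.Nonempty)
    (hf : ∀ i ∈ s, f i ≠ 0) (hsum : ∑ i ∈ s, f i = 0) {b : R} (hb : b ≠ 0) :
    ∃ i ∈ s, f i * b < 0 := by
  by_contra! h
  have hzero : ∑ i ∈ s, f i * b = 0 := by rw [← sum_mul, hsum, zero_mul]
  obtain ⟨i, hi⟩ := hs
  exact mul_ne_zero (hf i hi) hb ((sum_eq_zero_iff_of_nonneg h).1 hzero i hi)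

theorem mul_abs_add_mul_abs_eq_zero_of_mul_neg {R : Type*} [CommRing R] [LinearOrder R]
    [IsStrictOrderedRing R] {a b : R} (h : a * b < 0) : a * |b| + b * |a| = 0 := by
  rcases mul_neg_iff.1 h with ⟨ha, hb⟩ | ⟨ha, hb⟩
  · rw [abs_of_neg hb, abs_of_pos ha]; ring
  · rw [abs_of_pos hb, abs_of_neg ha]; ring

theorem sum_mul_ite_mem {ι R : Type*} [Fintype ι] [DecidableEq ι] [CommRing R] (c : ι → R)
    {s : Finset ι} {j : ι} (hj : j ∈ s) (y u v : R) :
    ∑ i, c i * (if i ∈ s then y + if i = j then u else 0 else v) =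
      (∑ i ∈ s, c i) * y + c j * u + (∑ i ∈ sᶜ, c i) * v := by
  have hs : ∑ i ∈ s, c i * (if i ∈ s then y + if i = j then u else 0 else v) =
      ∑ i ∈ s, (c i * y + if j = i then c i * u else 0) :=
    sum_congr rfl fun i hi => by simp [hi, mul_add, mul_ite, eq_comm]
  have hsc : ∑ i ∈ sᶜ, c i * (if i ∈ s then y + if i = j then u else 0 else v) =
      ∑ i ∈ sᶜ, c i * v :=
    sum_congr rfl fun i hi => by rw [if_neg (mem_compl.1 hi)]
  rw [← sum_add_sum_compl s, hs, hsc, sum_add_distrib, sum_ite_eq, if_pos hj, sum_mul, sum_mul]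

/-- Rado ('if' direction): if a nonempty subset of the coefficients of
`c₁x₁ + ⋯ + cₘxₘ = 0` sums to zero, the equation is regular. -/
theorem stmt_15 (m : ℕ) (c : Fin m → ℤ) (hc : ∀ i, c i ≠ 0)
    (hsub : ∃ s : Finset (Fin m), s.Nonempty ∧ (∑ i ∈ s, c i) = 0) :
    ∀ k : ℕ, 1 ≤ k → ∀ χ : ℕ → Fin k, ∃ x : Fin m → ℕ,
      (∀ i, 0 < x i) ∧ (∑ i, c i * (x i : ℤ)) = 0 ∧
      (∀ i j : Fin m, χ (x i) = χ (x j)) := by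
  intro k _ χ
  obtain ⟨s, hs, hsum⟩ := hsub
  set B := ∑ i ∈ sᶜ, c i
  rcases eq_or_ne B 0 with hB | hB
  · refine ⟨fun _ => 1, fun _ => one_pos, ?_, fun _ _ => rfl⟩
    simpa [← sum_add_sum_compl s c, hsum] using hB
  obtain ⟨j, hj, hjB⟩ := exists_mem_mul_neg_of_sum_eq_zero hs (fun i _ => hc i) hsum hB
  have hq : 0 < (c j).natAbs := Int.natAbs_pos.2 (hc j)
  obtain ⟨y, w, hy, hw, h₁, h₂⟩ := exists_isMonoTriple (p := B.natAbs) hq χ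
  let x : Fin m → ℕ := fun i =>
    if i ∈ s then y + if i = j then B.natAbs * w else 0 else (c j).natAbs * w
  have hcolor (i : Fin m) : χ (x i) = χ y := by
    simp only [x]; split_ifs <;> simp [h₁, h₂]
  refine ⟨x, fun i => ?_, ?_, fun i i' => (hcolor i).trans (hcolor i').symm⟩
  · have := Nat.mul_pos hq hw
    simp only [x]; split_ifs <;> omega
  calc ∑ i, c i * (x i : ℤ) = 0 * y + c j * (|B| * w) + B * (|c j| * w) := by
        simp only [x, Nat.cast_ite, Nat.cast_add, Nat.cast_mul, Nat.cast_zero, Int.natCast_natAbs]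
        rw [sum_mul_ite_mem c hj, hsum]
    _ = (c j * |B| + B * |c j|) * w := by ring
    _ = 0 := by rw [mul_abs_add_mul_abs_eq_zero_of_mul_neg hjB, zero_mul]
end

section
/- Let p be a prime and r ≥ 1, and let a, b, c be nonzero integers with v_p(a) = v_p(b) = v_p(a+b) = 0 and v_p(c) ≥ r. Let g be the residue of −a·b⁻¹ in the multiplicative group (ℤ/p^r)ˣ. Then g is not the identity of (ℤ/p^r)ˣ, and the functional graph on (ℤ/p^r)ˣ with edges {x, gx} is a disjoint union of cycles each of which has length equal to ord(g) divided by some power of p; in particular, if ord(g) is even this graph is properly 2-colorable, and it is always properly 3-colorable. -/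
/-! Left multiplication by `g` splits a group into the orbits `⟨g⟩ x`, each of size `ord(g)`, so
the power of `p` can be taken to be `p⁰`. Indexing every orbit by `ZMod (ord g)` turns the graph
into one that maps homomorphically onto the cycle graph of length `ord(g)`, and colourings of
that cycle pull back; `ord(g) ≥ 2` because `g = 1` would force `p ∣ a + b`. -/

open Subgroup SimpleGraph

section

variable {G : Type*} [Group G]

lemma ncard_setOf_eq_zpow_mul_eq_orderOf (g x : G) :
    {y : G | ∃ n : ℤ, y = g ^ n * x}.ncard = orderOf g := by
  have h : {y : G | ∃ n : ℤ, y = g ^ n * x} = (· * x) '' (zpowers g : Set G) := by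
    ext y
    constructor
    · rintro ⟨k, rfl⟩
      exact ⟨g ^ k, ⟨k, rfl⟩, rfl⟩
    · rintro ⟨_, ⟨k, rfl⟩, rfl⟩
      exact ⟨k, rfl⟩
  rw [h, Set.ncard_image_of_injective _ (mul_left_injective x), ← Nat.card_coe_set_eq,
    SetLike.coe_sort_coe, Nat.card_zpowers]

lemma exists_zmod_orderOf_map_mul_eq_add_one (g : G) :
    ∃ f : G → ZMod (orderOf g), ∀ x, f (g * x) = f x + 1 := by
  obtain ⟨rep, hrep_mul, hrep⟩ : ∃ rep : G → G,
      (∀ x, rep (g * x) = rep x) ∧ ∀ x, ∃ k : ℤ, g ^ k * x = rep x := by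
    let s := MulAction.orbitRel (zpowers g) G
    refine ⟨fun x => (Quotient.mk s x).out, fun x => ?_, fun x => ?_⟩
    · exact congrArg Quotient.out
        (Quotient.sound (MulAction.mem_orbit_iff.mpr ⟨⟨g, mem_zpowers g⟩, rfl⟩))
    · obtain ⟨⟨_, k, rfl⟩, hk⟩ := MulAction.mem_orbit_iff.mp (Quotient.mk_out (s := s) x)
      exact ⟨k, hk⟩
  choose k hk using hrep
  refine ⟨fun x => ((-k x : ℤ) : ZMod (orderOf g)), fun x => ?_⟩
  have hpow : g ^ (k (g * x) + 1) = g ^ k x := by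
    apply mul_left_injective x
    simp only [zpow_add_one, mul_assoc, hk, hrep_mul]
  have hmod := (ZMod.intCast_eq_intCast_iff _ _ _).mpr (zpow_eq_zpow_iff_modEq.mp hpow)
  push_cast at hmod ⊢
  linear_combination -hmod

lemma nonempty_hom_cycleGraph_orderOf {g : G} (hg : 1 < orderOf g) :
    Nonempty (fromRel (fun x y : G => y = g * x) →g cycleGraph (orderOf g)) := by
  obtain ⟨f, hf⟩ := exists_zmod_orderOf_map_mul_eq_add_one g
  have : NeZero (orderOf g) := ⟨by omega⟩
  let φ : G → Fin (orderOf g) := fun x => (ZMod.finEquiv _).symm (f x)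
  have hstep : ∀ x, (φ (g * x) - φ x).val = 1 := fun x => by
    simp only [φ, hf, map_add, map_one, add_sub_cancel_left, Fin.val_one', Nat.mod_eq_of_lt hg]
  refine ⟨⟨φ, fun {x y} hxy => ?_⟩⟩
  rw [cycleGraph_adj']
  obtain ⟨-, rfl | rfl⟩ := fromRel_adj _ _ _ |>.mp hxy
  · exact .inr (hstep x)
  · exact .inl (hstep y)

lemma colorable_two_fromRel_mul {g : G} (hg : 1 < orderOf g) (heven : Even (orderOf g)) :
    (fromRel (fun x y : G => y = g * x)).Colorable 2 :=
  (cycleGraph.bicoloring_of_even _ heven).colorable.of_hom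
    (nonempty_hom_cycleGraph_orderOf hg).some

lemma colorable_three_fromRel_mul {g : G} (hg : 1 < orderOf g) :
    (fromRel (fun x y : G => y = g * x)).Colorable 3 := by
  simpa using (cycleGraph.tricoloring _ hg).colorable.of_hom
    (nonempty_hom_cycleGraph_orderOf hg).some

end

lemma ZMod.unit_ne_one_of_mul_intCast_eq_neg {p r : ℕ} [Fact p.Prime] (hr : 1 ≤ r) {a b : ℤ}
    (hab : a + b ≠ 0) (hv : padicValInt p (a + b) = 0) {g : (ZMod (p ^ r))ˣ}
    (hg : (g : ZMod (p ^ r)) * b = -a) : g ≠ 1 := by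
  rintro rfl
  have hdvd : ((p ^ r : ℕ) : ℤ) ∣ a + b := by
    rw [← ZMod.intCast_zmod_eq_zero_iff_dvd]
    push_cast at hg ⊢
    linear_combination hg
  have hp_dvd : (p : ℤ) ^ 1 ∣ a + b := (pow_dvd_pow _ hr).trans (by exact_mod_cast hdvd)
  have : 1 ≤ padicValInt p (a + b) := ((padicValInt_dvd_iff 1 _).mp hp_dvd).resolve_left hab
  omega

theorem stmt_17_general (p : ℕ) (hp : p.Prime) (r : ℕ) (hr : 1 ≤ r)
    (a b : ℤ)
    (hvab : a + b ≠ 0 ∧ padicValInt p (a + b) = 0)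
    (g : (ZMod (p ^ r))ˣ)
    (hg : (g : ZMod (p ^ r)) * (b : ZMod (p ^ r)) = -(a : ZMod (p ^ r))) :
    g ≠ 1 ∧
    (∀ x : (ZMod (p ^ r))ˣ, ∃ i : ℕ,
      p ^ i * Set.ncard {y : (ZMod (p ^ r))ˣ | ∃ n : ℤ, y = g ^ n * x}
        = orderOf g) ∧
    (Even (orderOf g) →
      (SimpleGraph.fromRel (fun x y : (ZMod (p ^ r))ˣ => y = g * x)).Colorable 2) ∧
    (SimpleGraph.fromRel (fun x y : (ZMod (p ^ r))ˣ => y = g * x)).Colorable 3 := by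
  have : Fact p.Prime := ⟨hp⟩
  have : NeZero (p ^ r) := ⟨pow_ne_zero r hp.ne_zero⟩
  have hne : g ≠ 1 := ZMod.unit_ne_one_of_mul_intCast_eq_neg hr hvab.1 hvab.2 hg
  have hord : 1 < orderOf g := by
    have := orderOf_eq_one_iff.not.mpr hne
    have := orderOf_pos g
    omega
  refine ⟨hne, fun x => ⟨0, by rw [pow_zero, one_mul, ncard_setOf_eq_zpow_mul_eq_orderOf]⟩,
    colorable_two_fromRel_mul hord, colorable_three_fromRel_mul hord⟩

/-- Let `p` be a prime, `r ≥ 1`, and `a, b, c` nonzero integers with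
`v_p(a) = v_p(b) = v_p(a+b) = 0` and `v_p(c) ≥ r`. If `g ∈ (ℤ/p^r)ˣ` is the
residue of `-a·b⁻¹`, then `g ≠ 1`; each cycle of the functional graph
`x ↦ g·x` on `(ℤ/p^r)ˣ` has length `ord(g)` divided by some power of `p`;
if `ord(g)` is even the graph is properly 2-colorable; and it is always
properly 3-colorable. -/
theorem stmt_17 (p : ℕ) (hp : p.Prime) (r : ℕ) (hr : 1 ≤ r)
    (a b c : ℤ) (ha : a ≠ 0) (hb : b ≠ 0) (hc : c ≠ 0)
    (hva : padicValInt p a = 0) (hvb : padicValInt p b = 0)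
    (hvab : a + b ≠ 0 ∧ padicValInt p (a + b) = 0)
    (hvc : r ≤ padicValInt p c)
    (g : (ZMod (p ^ r))ˣ)
    (hg : (g : ZMod (p ^ r)) * (b : ZMod (p ^ r)) = -(a : ZMod (p ^ r))) :
    g ≠ 1 ∧
    (∀ x : (ZMod (p ^ r))ˣ, ∃ i : ℕ,
      p ^ i * Set.ncard {y : (ZMod (p ^ r))ˣ | ∃ n : ℤ, y = g ^ n * x}
        = orderOf g) ∧
    (Even (orderOf g) →
      (SimpleGraph.fromRel (fun x y : (ZMod (p ^ r))ˣ => y = g * x)).Colorable 2) ∧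
    (SimpleGraph.fromRel (fun x y : (ZMod (p ^ r))ˣ => y = g * x)).Colorable 3 :=
  stmt_17_general p hp r hr a b hvab g hg
end
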